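/- Let g be a Lie algebra with bracket [·,·] and φ : g → g a linear map such that [X,X']_R := [φX, X'] + [X, φX'] satisfies the Jacobi identity whenever φ satisfies the modified classical Yang–Baxter operator equation [φX, φX'] − φ([φX, X'] + [X, φX']) = −[X, X'] for all X, X'. Then (g, [·,·]_R) is a Lie algebra. -/
import Mathlib


/-- If `φ : g → g` is linear and satisfies the modified classical
Yang–Baxter equation `[φX, φY] − φ([X,Y]_R) = −[X,Y]` where
`[X,Y]_R = [φX, Y] + [X, φY]`, then `[·,·]_R` is skew-symmetric and satisfies
the Jacobi identity, so `(g, [·,·]_R)` is a Lie algebra. -/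
theorem stmt_12 (k : Type*) [Field k] [CharZero k]
    (g : Type*) [LieRing g] [LieAlgebra k g]
    (φ : g →ₗ[k] g) :
    ∀ brR : g → g → g, (brR = fun X Y => ⁅φ X, Y⁆ + ⁅X, φ Y⁆) →
    (∀ X Y : g, ⁅φ X, φ Y⁆ - φ (brR X Y) = -⁅X, Y⁆) →
    (∀ X Y : g, brR X Y = - brR Y X) ∧
    (∀ X Y Z : g, brR (brR X Y) Z + brR (brR Y Z) X + brR (brR Z X) Y = 0) := by
  intro brR hbr hYB
  have key : ∀ X Y : g, φ (brR X Y) = ⁅φ X, φ Y⁆ + ⁅X, Y⁆ := by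
    intro X Y
    have h := (sub_eq_iff_eq_add.mp (hYB X Y))
    rw [h]; abel
  have J : ∀ a b c : g, ⁅⁅a, b⁆, c⁆ + ⁅⁅b, c⁆, a⁆ + ⁅⁅c, a⁆, b⁆ = 0 := by
    intro a b c
    rw [← lie_skew ⁅a, b⁆ c, ← lie_skew ⁅b, c⁆ a, ← lie_skew ⁅c, a⁆ b]
    simp only [← neg_add, neg_eq_zero]
    exact lie_jacobi c a b
  constructor
  · intro X Y
    subst hbr
    simp only [← lie_skew (φ X) Y, ← lie_skew X (φ Y)]
    abel
  · intro X Y Z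
    have e1 := key X Y
    have e2 := key Y Z
    have e3 := key Z X
    subst hbr
    simp only at e1 e2 e3 ⊢
    rw [e1, e2, e3]
    calc ⁅⁅φ X, φ Y⁆ + ⁅X, Y⁆, Z⁆ + ⁅⁅φ X, Y⁆ + ⁅X, φ Y⁆, φ Z⁆ +
          (⁅⁅φ Y, φ Z⁆ + ⁅Y, Z⁆, X⁆ + ⁅⁅φ Y, Z⁆ + ⁅Y, φ Z⁆, φ X⁆) +
          (⁅⁅φ Z, φ X⁆ + ⁅Z, X⁆, Y⁆ + ⁅⁅φ Z, X⁆ + ⁅Z, φ X⁆, φ Y⁆)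
        = (⁅⁅X, Y⁆, Z⁆ + ⁅⁅Y, Z⁆, X⁆ + ⁅⁅Z, X⁆, Y⁆)
          + (⁅⁅φ X, Y⁆, φ Z⁆ + ⁅⁅Y, φ Z⁆, φ X⁆ + ⁅⁅φ Z, φ X⁆, Y⁆)
          + (⁅⁅φ Y, Z⁆, φ X⁆ + ⁅⁅Z, φ X⁆, φ Y⁆ + ⁅⁅φ X, φ Y⁆, Z⁆)
          + (⁅⁅φ Z, X⁆, φ Y⁆ + ⁅⁅X, φ Y⁆, φ Z⁆ + ⁅⁅φ Y, φ Z⁆, X⁆) := by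
          simp only [add_lie]; abel
      _ = 0 := by rw [J, J (φ X) Y (φ Z), J (φ Y) Z (φ X), J (φ Z) X (φ Y)]; abel
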